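/- Let A be an m×n real matrix, Ṽ ∈ ℝ^{n×r} and Ũ ∈ ℝ^{m×(r+ℓ)} orthonormal with orthogonal completions Q₁ = [Ũ, Ũ⊥] and Q₂ = [Ṽ, Ṽ⊥], and set Ā = Q₁*AQ₂ with blocks Ā₁₁ ((r+ℓ)×r), Ā₁₂, Ā₂₁, Ā₂₂. Assume rank(Ā₁₁) = r. Then Q₁*(A − AṼ(Ũ*AṼ)†Ũ*A)Q₂ = [[0, Ā₁₂ − Ā₁₁Ā₁₁†Ā₁₂],[0, Ā₂₂ − Ā₂₁Ā₁₁†Ā₁₂]]; that is, up to the orthogonal transformations Q₁, Q₂, the generalized Nyström approximation error is zero in the first block column, equals the residual of the orthogonal projection of Ā₁₂ onto the column space of Ā₁₁ in the (1,2) block, and equals the generalized Schur complement Ā₂₂ − Ā₂₁Ā₁₁†Ā₁₂ in the (2,2) block. -/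

import Mathlib

open Matrix

theorem Matrix.isHermitian_transpose_mul_self {m n : Type*} [Fintype m] (A : Matrix m n ℝ) :
    (Aᵀ * A).IsHermitian := by
  rw [IsHermitian, conjTranspose_eq_transpose_of_trivial, transpose_mul, transpose_transpose]

/-- The tuple `f` sorted in nonincreasing order. -/
noncomputable def sortedDesc {α : Type*} [Fintype α] (f : α → ℝ) :
    Fin (Fintype.card α) → ℝ := fun i =>
  let g : Fin (Fintype.card α) → ℝ := f ∘ (Fintype.equivFin α).symm
  g (Tuple.sort g i.rev)

/-- Singular values of a real matrix, in nonincreasing order (generic index types). -/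
noncomputable def sVals {m n : Type*} [Fintype m] [Fintype n] [DecidableEq n]
    (M : Matrix m n ℝ) : Fin (Fintype.card n) → ℝ :=
  sortedDesc fun j => Real.sqrt ((Matrix.isHermitian_transpose_mul_self M).eigenvalues j)

/-- Singular values of a real `Fin m × Fin n` matrix, in nonincreasing order,
`singularValues M 0` being the largest. -/
noncomputable def singularValues {m n : ℕ} (M : Matrix (Fin m) (Fin n) ℝ) :
    Fin n → ℝ := fun i =>
  let g : Fin n → ℝ := fun j =>
    Real.sqrt ((Matrix.isHermitian_transpose_mul_self M).eigenvalues j)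
  g (Tuple.sort g i.rev)

/-- The spectral (operator 2-)norm of a real matrix. -/
noncomputable def specNorm {m n : Type*} [Fintype m] [Fintype n] [DecidableEq n]
    (M : Matrix m n ℝ) : ℝ :=
  ‖LinearMap.toContinuousLinearMap (Matrix.toEuclideanLin M)‖

/-- The Moore-Penrose pseudoinverse of a real matrix, defined via the Tikhonov
regularization limit of `(AᵀA + εI)⁻¹Aᵀ` as `ε` tends to `0` from above. -/
noncomputable def pinv {m n : Type*} [Fintype m] [Fintype n] [DecidableEq n]
    (A : Matrix m n ℝ) : Matrix n m ℝ :=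
  Filter.limUnder (nhdsWithin 0 (Set.Ioi 0)) fun ε : ℝ => (Aᵀ * A + ε • 1)⁻¹ * Aᵀ

/-!
Conjugating by `Q₁ = [Ũ, Ũ⊥]` and `Q₂ = [Ṽ, Ṽ⊥]` only reads off blocks: `Q₁ᵀAṼ` is the first block
column `[Ā₁₁; Ā₂₁]` of `Ā` and `ŨᵀAQ₂` its first block row `[Ā₁₁, Ā₁₂]`, so the transformed
approximation is `[Ā₁₁; Ā₂₁] Ā₁₁† [Ā₁₁, Ā₁₂]`. Since `Ā₁₁` has full column rank, `Ā₁₁†Ā₁₁ = I`,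
which makes the approximation exact on the first block column.
-/

namespace Matrix

variable {m n : Type*} [Fintype m] [Fintype n] [DecidableEq n]

lemma isUnit_of_rank_eq_card {K : Type*} [Field K] {B : Matrix n n K}
    (h : B.rank = Fintype.card n) : IsUnit B := by
  rw [← mulVec_surjective_iff_isUnit, ← coe_mulVecLin, ← LinearMap.range_eq_top]
  exact Submodule.eq_top_of_finrank_eq (by simpa [rank] using h)

lemma pinv_eq_inv_mul_transpose {A : Matrix m n ℝ} (h : IsUnit (Aᵀ * A)) :
    pinv A = (Aᵀ * A)⁻¹ * Aᵀ := by
  have hinv : ContinuousAt (fun ε : ℝ => (Aᵀ * A + ε • 1)⁻¹) 0 := by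
    refine ContinuousAt.comp (g := (·⁻¹)) ?_ (by fun_prop)
    rw [zero_smul, add_zero]
    exact continuousAt_matrix_inv _ (by
      simpa using NormedRing.inverse_continuousAt ((isUnit_iff_isUnit_det _).mp h).unit)
  have hcont : ContinuousAt (fun ε : ℝ => (Aᵀ * A + ε • 1)⁻¹ * Aᵀ) 0 :=
    (continuous_id.matrix_mul continuous_const).continuousAt.comp hinv
  have hlim := (hcont.continuousWithinAt (s := Set.Ioi 0)).tendsto
  rw [zero_smul, add_zero] at hlim
  exact hlim.limUnder_eq

lemma pinv_mul_self_of_rank_eq_card {A : Matrix m n ℝ} (h : A.rank = Fintype.card n) :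
    pinv A * A = 1 := by
  have hA : IsUnit (Aᵀ * A) := isUnit_of_rank_eq_card (by rwa [rank_transpose_mul_self])
  rw [pinv_eq_inv_mul_transpose hA, Matrix.mul_assoc,
    nonsing_inv_mul _ ((isUnit_iff_isUnit_det _).mp hA)]

section Blocks

variable {R : Type*} {k l k' l' p q : Type*}

lemma transpose_fromCols_mul_mul_fromCols [Semiring R] [Fintype p] [Fintype q]
    (U : Matrix p k R) (U' : Matrix p k' R) (M : Matrix p q R) (V : Matrix q l R) (V' : Matrix q l' R) :
    (fromCols U U')ᵀ * M * fromCols V V' =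
      fromBlocks (Uᵀ * M * V) (Uᵀ * M * V') (U'ᵀ * M * V) (U'ᵀ * M * V') := by
  rw [transpose_fromCols, fromRows_mul, fromRows_mul_fromCols]

lemma fromBlocks_sub_fromRows_mul_mul_fromCols [Ring R] [Fintype k] [Fintype l] [DecidableEq l]
    {A₁₁ : Matrix k l R} {A₁₂ : Matrix k l' R} {A₂₁ : Matrix k' l R} {A₂₂ : Matrix k' l' R}
    {X : Matrix l k R} (hX : X * A₁₁ = 1) :
    fromBlocks A₁₁ A₁₂ A₂₁ A₂₂ - fromRows A₁₁ A₂₁ * X * fromCols A₁₁ A₁₂ =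
      fromBlocks 0 (A₁₂ - A₁₁ * X * A₁₂) 0 (A₂₂ - A₂₁ * X * A₁₂) := by
  rw [fromRows_mul, fromRows_mul_fromCols, Matrix.mul_assoc A₁₁, Matrix.mul_assoc A₂₁, hX,
    Matrix.mul_one, Matrix.mul_one, sub_eq_add_neg, fromBlocks_neg, fromBlocks_add]
  simp only [← sub_eq_add_neg, sub_self]

end Blocks

end Matrix

theorem generalized_nystrom_error_structure_general
    (m n r ℓ : ℕ)
    (A : Matrix (Fin m) (Fin n) ℝ)
    (tV : Matrix (Fin n) (Fin r) ℝ) (tU : Matrix (Fin m) (Fin (r + ℓ)) ℝ)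
    (tVperp : Matrix (Fin n) (Fin (n - r)) ℝ)
    (tUperp : Matrix (Fin m) (Fin (m - (r + ℓ))) ℝ)
    (Q₁ : Matrix (Fin m) (Fin (r + ℓ) ⊕ Fin (m - (r + ℓ))) ℝ)
    (Q₂ : Matrix (Fin n) (Fin r ⊕ Fin (n - r)) ℝ)
    (hQ₁ : Q₁ = Matrix.fromCols tU tUperp)
    (hQ₂ : Q₂ = Matrix.fromCols tV tVperp)
    (Abar : Matrix (Fin (r + ℓ) ⊕ Fin (m - (r + ℓ))) (Fin r ⊕ Fin (n - r)) ℝ)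
    (hAbar : Abar = Q₁ᵀ * A * Q₂)
    (A₁₁ : Matrix (Fin (r + ℓ)) (Fin r) ℝ) (hA₁₁ : A₁₁ = Abar.toBlocks₁₁)
    (A₁₂ : Matrix (Fin (r + ℓ)) (Fin (n - r)) ℝ) (hA₁₂ : A₁₂ = Abar.toBlocks₁₂)
    (A₂₁ : Matrix (Fin (m - (r + ℓ))) (Fin r) ℝ) (hA₂₁ : A₂₁ = Abar.toBlocks₂₁)
    (A₂₂ : Matrix (Fin (m - (r + ℓ))) (Fin (n - r)) ℝ) (hA₂₂ : A₂₂ = Abar.toBlocks₂₂)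
    (hrank : A₁₁.rank = r) :
    Q₁ᵀ * (A - A * tV * pinv (tUᵀ * A * tV) * (tUᵀ * A)) * Q₂ =
      Matrix.fromBlocks 0 (A₁₂ - A₁₁ * pinv A₁₁ * A₁₂)
                        0 (A₂₂ - A₂₁ * pinv A₁₁ * A₁₂) := by
  subst hQ₁ hQ₂ hAbar
  simp only [transpose_fromCols_mul_mul_fromCols, toBlocks_fromBlocks₁₁, toBlocks_fromBlocks₁₂,
    toBlocks_fromBlocks₂₁, toBlocks_fromBlocks₂₂] at hA₁₁ hA₁₂ hA₂₁ hA₂₂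
  subst hA₁₁ hA₁₂ hA₂₁ hA₂₂
  have hpinv : pinv (tUᵀ * A * tV) * (tUᵀ * A * tV) = 1 :=
    pinv_mul_self_of_rank_eq_card (by rwa [Fintype.card_fin])
  rw [← fromBlocks_sub_fromRows_mul_mul_fromCols hpinv, ← transpose_fromCols_mul_mul_fromCols,
    Matrix.mul_sub, Matrix.sub_mul]
  congr 1
  simp only [transpose_fromCols, fromRows_mul, mul_fromCols, Matrix.mul_assoc]

/-- **Equation (3.4)**: up to the orthogonal transformations `Q₁, Q₂`, the error of
the generalized Nyström approximation is zero in the first block column, equals the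
residual `Ā₁₂ − Ā₁₁Ā₁₁†Ā₁₂` in the `(1,2)` block, and equals the generalized Schur
complement `Ā₂₂ − Ā₂₁Ā₁₁†Ā₁₂` in the `(2,2)` block. -/
theorem generalized_nystrom_error_structure
    (m n r ℓ : ℕ) (hrn : r ≤ n) (hrlm : r + ℓ ≤ m)
    (A : Matrix (Fin m) (Fin n) ℝ)
    (tV : Matrix (Fin n) (Fin r) ℝ) (tU : Matrix (Fin m) (Fin (r + ℓ)) ℝ)
    (tVperp : Matrix (Fin n) (Fin (n - r)) ℝ)
    (tUperp : Matrix (Fin m) (Fin (m - (r + ℓ))) ℝ)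
    (hV : tVᵀ * tV = 1) (hU : tUᵀ * tU = 1)
    (Q₁ : Matrix (Fin m) (Fin (r + ℓ) ⊕ Fin (m - (r + ℓ))) ℝ)
    (Q₂ : Matrix (Fin n) (Fin r ⊕ Fin (n - r)) ℝ)
    (hQ₁ : Q₁ = Matrix.fromCols tU tUperp)
    (hQ₂ : Q₂ = Matrix.fromCols tV tVperp)
    (hQ₁o : Q₁ᵀ * Q₁ = 1) (hQ₁o' : Q₁ * Q₁ᵀ = 1)
    (hQ₂o : Q₂ᵀ * Q₂ = 1) (hQ₂o' : Q₂ * Q₂ᵀ = 1)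
    (Abar : Matrix (Fin (r + ℓ) ⊕ Fin (m - (r + ℓ))) (Fin r ⊕ Fin (n - r)) ℝ)
    (hAbar : Abar = Q₁ᵀ * A * Q₂)
    (A₁₁ : Matrix (Fin (r + ℓ)) (Fin r) ℝ) (hA₁₁ : A₁₁ = Abar.toBlocks₁₁)
    (A₁₂ : Matrix (Fin (r + ℓ)) (Fin (n - r)) ℝ) (hA₁₂ : A₁₂ = Abar.toBlocks₁₂)
    (A₂₁ : Matrix (Fin (m - (r + ℓ))) (Fin r) ℝ) (hA₂₁ : A₂₁ = Abar.toBlocks₂₁)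
    (A₂₂ : Matrix (Fin (m - (r + ℓ))) (Fin (n - r)) ℝ) (hA₂₂ : A₂₂ = Abar.toBlocks₂₂)
    (hrank : A₁₁.rank = r) :
    Q₁ᵀ * (A - A * tV * pinv (tUᵀ * A * tV) * (tUᵀ * A)) * Q₂ =
      Matrix.fromBlocks 0 (A₁₂ - A₁₁ * pinv A₁₁ * A₁₂)
                        0 (A₂₂ - A₂₁ * pinv A₁₁ * A₁₂) :=
  generalized_nystrom_error_structure_general m n r ℓ A tV tU tVperp tUperp Q₁ Q₂ hQ₁ hQ₂ Abar hAbar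
    A₁₁ hA₁₁ A₁₂ hA₁₂ A₂₁ hA₂₁ A₂₂ hA₂₂ hrank
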